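/- arXiv:2105.10657 — 2 statements merged into one kernel-verified Lean document; each statement's English description precedes it below -/
import Mathlib

section
/- Let B be the n×n diagonal matrix with diagonal entries β₁,…,βₙ and define the coordinatewise SBX operator on row vectors by h(x₁,x₂) = x₁ + (x₂ − x₁)B. If n ≥ 2 and the βᵢ are not all equal, then there exists an orthogonal matrix M and vectors x₁, x₂ in ℝⁿ such that h(x₁M, x₂M) ≠ h(x₁,x₂)M. -/
/-!
The invariance defect `h (x₁ M) (x₂ M) - h x₁ x₂ M` equals `(x₂ - x₁) (M B - B M)`, so `h` is
invariant under `M` only if `M` commutes with `B`. The permutation matrix of the transposition of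
two coordinates with different spread factors is orthogonal and does not commute with `B`.
-/

namespace Matrix

variable {n R : Type*} [Fintype n]

section Permutation

variable [DecidableEq n]

lemma permMatrix_mem_orthogonalGroup [CommRing R] (σ : Equiv.Perm n) :
    σ.permMatrix R ∈ orthogonalGroup n R := by
  rw [mem_orthogonalGroup_iff, transpose_permMatrix, ← permMatrix_mul, inv_mul_cancel,
    permMatrix_one]

lemma permMatrix_mul_diagonal_ne_diagonal_mul_permMatrix [NonAssocSemiring R]
    (σ : Equiv.Perm n) {β : n → R} {i : n} (hβ : β (σ i) ≠ β i) :
    σ.permMatrix R * diagonal β ≠ diagonal β * σ.permMatrix R :=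
  fun hcomm => hβ <| by simpa using congrFun₂ hcomm i (σ i)

end Permutation

variable [CommRing R]

def sbx (B : Matrix n n R) (y₁ y₂ : n → R) : n → R :=
  y₁ + (y₂ - y₁) ᵥ* B

lemma sbx_vecMul_sub_sbx_vecMul (B M : Matrix n n R) (x₁ x₂ : n → R) :
    sbx B (x₁ ᵥ* M) (x₂ ᵥ* M) - sbx B x₁ x₂ ᵥ* M = (x₂ - x₁) ᵥ* (M * B - B * M) := by
  simp only [sbx, ← sub_vecMul, add_vecMul, vecMul_sub, vecMul_vecMul]
  abel

lemma exists_sbx_vecMul_ne {B M : Matrix n n R} (hMB : M * B ≠ B * M) :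
    ∃ x₁ x₂ : n → R, sbx B (x₁ ᵥ* M) (x₂ ᵥ* M) ≠ sbx B x₁ x₂ ᵥ* M := by
  obtain ⟨v, hv⟩ := not_forall.mp (mt ext_iff_vecMul.mpr hMB)
  refine ⟨0, v, fun heq => hv ?_⟩
  have hdefect := sbx_vecMul_sub_sbx_vecMul B M 0 v
  rwa [heq, sub_self, sub_zero, vecMul_sub, eq_comm, sub_eq_zero] at hdefect

end Matrix

open Matrix in
theorem sbx_coordinatewise_not_rotation_invariant_general (n : ℕ)
    (β : Fin n → ℝ) (hβ : ¬ ∀ i j, β i = β j)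
    (h : (Fin n → ℝ) → (Fin n → ℝ) → (Fin n → ℝ))
    (hdef : ∀ y₁ y₂, h y₁ y₂ = y₁ + Matrix.vecMul (y₂ - y₁) (Matrix.diagonal β)) :
    ∃ M ∈ Matrix.orthogonalGroup (Fin n) ℝ, ∃ x₁ x₂ : Fin n → ℝ,
      h (Matrix.vecMul x₁ M) (Matrix.vecMul x₂ M) ≠ Matrix.vecMul (h x₁ x₂) M := by
  obtain rfl : h = sbx (diagonal β) := funext₂ hdef
  push Not at hβ
  obtain ⟨i, j, hij⟩ := hβ
  refine ⟨_, permMatrix_mem_orthogonalGroup (Equiv.swap i j), exists_sbx_vecMul_ne ?_⟩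
  refine permMatrix_mul_diagonal_ne_diagonal_mul_permMatrix _ (i := i) ?_
  rwa [Equiv.swap_apply_left, ne_comm]

theorem sbx_coordinatewise_not_rotation_invariant (n : ℕ) (hn : 2 ≤ n)
    (β : Fin n → ℝ) (hβ : ¬ ∀ i j, β i = β j)
    (h : (Fin n → ℝ) → (Fin n → ℝ) → (Fin n → ℝ))
    (hdef : ∀ y₁ y₂, h y₁ y₂ = y₁ + Matrix.vecMul (y₂ - y₁) (Matrix.diagonal β)) :
    ∃ M ∈ Matrix.orthogonalGroup (Fin n) ℝ, ∃ x₁ x₂ : Fin n → ℝ,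
      h (Matrix.vecMul x₁ M) (Matrix.vecMul x₂ M) ≠ Matrix.vecMul (h x₁ x₂) M :=
  sbx_coordinatewise_not_rotation_invariant_general n β hβ h hdef
end

section
/- Let h : ℝᵗ → ℝ. Then h satisfies both h(x + b·𝟙) = h(x) + b for all real b and h(a·x) = a·h(x) for all real a, if and only if h has the form h(x₁,…,xₜ) = x₁ + ψ(x₂−x₁,…,xₜ−x_{t−1}) where ψ : ℝ^{t−1} → ℝ is positively homogeneous of degree 1 on ℝ and satisfies ψ(a·v) = a·ψ(v) for all real a. -/
/-!
A vector `x` is recovered from `x 0` and its successive differences as `x 0` plus their partial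
sums. Translation invariance therefore gives `h x = x 0 + ψ (differences of x)` with
`ψ := h ∘ Fin.partialSum`, and `ψ` inherits homogeneity from `h` because taking partial sums is
linear.
-/

namespace Fin

variable {n : ℕ}

theorem partialSum_comp_addMonoidHom {M N : Type*} [AddMonoid M] [AddMonoid N] (φ : M →+ N)
    (f : Fin n → M) : partialSum (φ ∘ f) = φ ∘ partialSum f :=
  funext fun i => i.inductionOn (by simp) fun j hj => by
    simp only [partialSum_succ, hj, Function.comp_apply, map_add]

theorem partialSum_const_mul {R : Type*} [NonUnitalNonAssocSemiring R] (a : R)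
    (f : Fin n → R) : partialSum (fun j => a * f j) = fun i => a * partialSum f i :=
  partialSum_comp_addMonoidHom (AddMonoidHom.mulLeft a) f

theorem partialSum_succ_sub_castSucc_add_zero {G : Type*} [AddCommGroup G] (f : Fin (n + 1) → G)
    (i : Fin (n + 1)) : partialSum (fun j : Fin n => f j.succ - f j.castSucc) i + f 0 = f i := by
  rw [add_comm]
  simpa only [neg_add_eq_sub, Pi.vadd_apply, vadd_eq_add] using
    congrFun (partialSum_left_neg f) i

end Fin

theorem translation_scale_invariant_iff (t : ℕ)
    (h : (Fin (t + 1) → ℝ) → ℝ) :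
    ((∀ (x : Fin (t + 1) → ℝ) (b : ℝ), h (fun i => x i + b) = h x + b) ∧
      (∀ (x : Fin (t + 1) → ℝ) (a : ℝ), h (fun i => a * x i) = a * h x)) ↔
      ∃ ψ : (Fin t → ℝ) → ℝ,
        (∀ (v : Fin t → ℝ) (a : ℝ), ψ (fun i => a * v i) = a * ψ v) ∧
        ∀ x : Fin (t + 1) → ℝ,
          h x = x 0 + ψ (fun i => x i.succ - x i.castSucc) := by
  constructor
  · rintro ⟨htrans, hscale⟩
    refine ⟨fun v => h (Fin.partialSum v), fun v a => ?_, fun x => ?_⟩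
    · exact (congrArg h (Fin.partialSum_const_mul a v)).trans (hscale _ a)
    · conv_lhs => rw [← funext (Fin.partialSum_succ_sub_castSucc_add_zero x), htrans, add_comm]
  · rintro ⟨ψ, hψ, hrep⟩
    obtain rfl : h = fun x => x 0 + ψ (fun i => x i.succ - x i.castSucc) := funext hrep
    refine ⟨fun x b => ?_, fun x a => ?_⟩
    · simp only [add_sub_add_right_eq_sub]
      ring
    · simp only [← mul_sub, hψ]
      ring
end
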